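/- arXiv:2301.01639 — 2 statements merged into one kernel-verified Lean document; each statement's English description precedes it below -/
import Mathlib

section
/- Let N ≥ 1, Θ ∈ (0,∞)^N, and let Y : ℤ^N → ℝ be any function. Define ΔY_k = Σ_{i ∈ {0,1}^N} (−1)^{Σ_l i_l} Y(k_1−i_1, …, k_N−i_N), and define G : ℤ^N → ℝ by G_t = Σ_{k_1 = 1−t_2−…−t_N}^{t_1} Σ_{k_2 = 1−k_1−t_3−…−t_N}^{t_2} ⋯ Σ_{k_N = 1−k_1−…−k_{N−1}}^{t_N} e^{−⟨k,Θ⟩} ΔY_k when Σ_{l=1}^N t_l ≥ 1, and G_t = (−1)^N Σ_{k_1 = t_1+1}^{−t_2−…−t_N−N+1} Σ_{k_2 = t_2+1}^{−k_1−t_3−…−t_N−N+2} ⋯ Σ_{k_N = t_N+1}^{−k_1−…−k_{N−1}} e^{−⟨k,Θ⟩} ΔY_k when Σ_{l=1}^N t_l ≤ 0 (empty sums being zero). Then the square increment of G satisfies Δ_t G = e^{−⟨t,Θ⟩} ΔY_t for every t ∈ ℤ^N. -/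
open MeasureTheory Filter

noncomputable section

/-- Two families of real random variables indexed by `ℤ^N` have the same
finite-dimensional distributions. -/
def HasSameFDD {Ω : Type*} [MeasurableSpace Ω] {N : ℕ} (μ : Measure Ω)
    (X Y : (Fin N → ℤ) → Ω → ℝ) : Prop :=
  ∀ (n : ℕ) (t : Fin n → (Fin N → ℤ)),
    μ.map (fun ω i => X (t i) ω) = μ.map (fun ω i => Y (t i) ω)

/-- A random field on `ℤ^N` is stationary if every shift leaves the
finite-dimensional distributions unchanged. -/
def IsStationaryRF {Ω : Type*} [MeasurableSpace Ω] {N : ℕ} (μ : Measure Ω)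
    (X : (Fin N → ℤ) → Ω → ℝ) : Prop :=
  ∀ s : Fin N → ℤ, HasSameFDD μ (fun t => X (t + s)) X

/-- A random field `Y` on `ℤ^N` is `Θ`-self-similar if `(Y_{t+s})_t` equals
`(e^{⟨s,Θ⟩} Y_t)_t` in finite-dimensional distributions for every `s`. -/
def IsSelfSimilar {Ω : Type*} [MeasurableSpace Ω] {N : ℕ} (μ : Measure Ω)
    (Θ : Fin N → ℝ) (Y : (Fin N → ℤ) → Ω → ℝ) : Prop :=
  ∀ s : Fin N → ℤ, HasSameFDD μ (fun t => Y (t + s))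
    (fun t ω => Real.exp (∑ l, (s l : ℝ) * Θ l) * Y t ω)

/-- The square increment `Δ_t X = Σ_{i ∈ {0,1}^N} (−1)^{Σ_l i_l} X_{t−i}`. -/
def sqInc {N : ℕ} (X : (Fin N → ℤ) → ℝ) (t : Fin N → ℤ) : ℝ :=
  ∑ i : Fin N → Bool,
    (-1 : ℝ) ^ ((∑ l, if i l then 1 else 0 : ℕ)) *
      X (fun l => t l - if i l then 1 else 0)

/-- A field has stationary (rectangular) increments if its square-increment
field is stationary. -/
def HasStationaryIncrements {Ω : Type*} [MeasurableSpace Ω] {N : ℕ} (μ : Measure Ω)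
    (G : (Fin N → ℤ) → Ω → ℝ) : Prop :=
  IsStationaryRF μ (fun t ω => sqInc (fun u => G u ω) t)

/-- The inner product `⟨Θ̂, X̂⁻_t⟩ = Σ_{i ∈ {0,1}^N, i ≠ 0} (−1)^{1+Σ_l i_l}
e^{−⟨i,Θ⟩} X_{t−i}`. -/
def prevInner {N : ℕ} (Θ : Fin N → ℝ) (X : (Fin N → ℤ) → ℝ) (t : Fin N → ℤ) : ℝ :=
  ∑ i ∈ Finset.univ.filter (fun i : Fin N → Bool => i ≠ fun _ => false),
    (-1 : ℝ) ^ ((1 + ∑ l, if i l then 1 else 0 : ℕ)) *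
      (Real.exp (-∑ l, (if i l then (1 : ℝ) else 0) * Θ l) *
        X (fun l => t l - if i l then 1 else 0))

/-- Iterated limit in probability `lim_{M₁→∞} ⋯ lim_{M_k→∞} F(M₁,…,M_k) = Z`:
the innermost limit is over the last variable, the outermost over the first. -/
def IterLimInProb {Ω : Type*} [MeasurableSpace Ω] (μ : Measure Ω) :
    (k : ℕ) → ((Fin k → ℕ) → Ω → ℝ) → (Ω → ℝ) → Prop
  | 0, F, Z => ∀ ω, F (fun i => i.elim0) ω = Z ω
  | k + 1, F, Z => ∃ H : ℕ → Ω → ℝ,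
      (∀ M₁ : ℕ, IterLimInProb μ k (fun M => F (Fin.cons M₁ M)) (H M₁)) ∧
      TendstoInMeasure μ H atTop Z

/-- The class `𝒢_Θ`: stationary increment fields `G` vanishing on
`Σ_l t_l ∈ {0,−1,…,−N+1}` such that the iterated limit (in probability)
`lim_{M₁→∞}⋯lim_{M_N→∞} Σ_{j₁=−M₁}^{t₁}⋯Σ_{j_N=−M_N}^{t_N} e^{⟨j,Θ⟩} Δ_j G`
exists as an (almost surely finite, real-valued) random variable for every `t`. -/
def MemClassG {Ω : Type*} [MeasurableSpace Ω] {N : ℕ} (μ : Measure Ω)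
    (Θ : Fin N → ℝ) (G : (Fin N → ℤ) → Ω → ℝ) : Prop :=
  HasStationaryIncrements μ G ∧
  (∀ t : Fin N → ℤ, -(N : ℤ) + 1 ≤ ∑ l, t l → (∑ l, t l) ≤ 0 → ∀ ω, G t ω = 0) ∧
  (∀ t : Fin N → ℤ, ∃ Z : Ω → ℝ,
    IterLimInProb μ N (fun M ω =>
      ∑ j ∈ Finset.Icc (fun l => -(M l : ℤ)) t,
        Real.exp (∑ l, (j l : ℝ) * Θ l) * sqInc (fun u => G u ω) j) Z)

/-- The iterated (chained) sum
`Σ_{k₁ = c − t₂ − … − t_N}^{t₁} Σ_{k₂ = c − k₁ − t₃ − … − t_N}^{t₂} ⋯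
 Σ_{k_N = c − k₁ − … − k_{N−1}}^{t_N} f(k)`, with empty ranges contributing `0`. -/
def iterSumPos : (n : ℕ) → ℤ → (Fin n → ℤ) → ((Fin n → ℤ) → ℝ) → ℝ
  | 0, _, _, f => f (fun i => i.elim0)
  | n + 1, c, t, f =>
      ∑ k ∈ Finset.Icc (c - ∑ l : Fin n, t l.succ) (t 0),
        iterSumPos n (c - k) (fun l => t l.succ) (fun j => f (Fin.cons k j))

/-- The iterated (chained) sum
`Σ_{k₁ = t₁+1}^{c − t₂ − … − t_N − N + 1} Σ_{k₂ = t₂+1}^{c − k₁ − t₃ − … − t_N − N + 2} ⋯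
 Σ_{k_N = t_N+1}^{c − k₁ − … − k_{N−1}} f(k)`, with empty ranges contributing `0`. -/
def iterSumNeg : (n : ℕ) → ℤ → (Fin n → ℤ) → ((Fin n → ℤ) → ℝ) → ℝ
  | 0, _, _, f => f (fun i => i.elim0)
  | n + 1, c, t, f =>
      ∑ k ∈ Finset.Icc (t 0 + 1) (c - (∑ l : Fin n, t l.succ) - (n : ℤ)),
        iterSumNeg n (c - k) (fun l => t l.succ) (fun j => f (Fin.cons k j))

/-- The field `G` built from a (deterministic realisation of a) field `Y`:
for `Σ_l t_l ≥ 1` it is the chained sum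
`Σ_{k₁ = 1−t₂−…−t_N}^{t₁} ⋯ Σ_{k_N = 1−k₁−…−k_{N−1}}^{t_N} e^{−⟨k,Θ⟩} Δ_k Y`,
and for `Σ_l t_l ≤ 0` it is
`(−1)^N Σ_{k₁ = t₁+1}^{−t₂−…−t_N−N+1} ⋯ Σ_{k_N = t_N+1}^{−k₁−…−k_{N−1}} e^{−⟨k,Θ⟩} Δ_k Y`. -/
def lampertiG {N : ℕ} (Θ : Fin N → ℝ) (Y : (Fin N → ℤ) → ℝ) (t : Fin N → ℤ) : ℝ :=
  if 1 ≤ ∑ l, t l then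
    iterSumPos N 1 t (fun k => Real.exp (-∑ l, (k l : ℝ) * Θ l) * sqInc Y k)
  else
    (-1 : ℝ) ^ N *
      iterSumNeg N 0 t (fun k => Real.exp (-∑ l, (k l : ℝ) * Θ l) * sqInc Y k)

/-! Write `g k = e^{-⟨k,Θ⟩} Δ_k Y`. Each branch of `G` is a sum of `g` over a discrete simplex,
and the simplex of the other branch is empty, so for every `u`
`G u = Σ_{k ≤ u, Σk ≥ 1} g k + (-1)^N Σ_{u < k, Σk ≤ 0} g k` (orders componentwise).
On the cell `[t - 1, t]` both simplices lie in a fixed finite set, so `Δ_t` passes to the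
indicators `[k ≤ u] = ∏_l [k_l ≤ u_l]` and `[u < k] = ∏_l [u_l < k_l]`; being products, their
square increments factor into first differences and equal `[k = t]` and `(-1)^N [k = t]`.
Hence `Δ_t G = g t ([Σt ≥ 1] + [Σt ≤ 0]) = g t`. -/

open Finset

noncomputable section Simplex

variable {ι : Type*} [Fintype ι]

lemma sub_le_sum_sub_sum {k t : ι → ℤ} (h : k ≤ t) (l : ι) :
    t l - k l ≤ ∑ j, t j - ∑ j, k j := by
  simpa [sum_sub_distrib] using
    single_le_sum (f := t - k) (fun j _ => sub_nonneg.2 (h j)) (mem_univ l)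

variable [DecidableEq ι]

def simplexBelow (c : ℤ) (t : ι → ℤ) : Finset (ι → ℤ) :=
  (Icc (fun l => c - ∑ j, t j + t l) t).filter fun k => c ≤ ∑ l, k l

def simplexAbove (c : ℤ) (t : ι → ℤ) : Finset (ι → ℤ) :=
  (Icc (t + 1) fun l => c - ∑ j, t j + t l).filter fun k => ∑ l, k l ≤ c

variable {c : ℤ} {t u k : ι → ℤ}

lemma mem_simplexBelow : k ∈ simplexBelow c t ↔ k ≤ t ∧ c ≤ ∑ l, k l := by
  simp only [simplexBelow, mem_filter, mem_Icc]
  refine ⟨fun h => ⟨h.1.2, h.2⟩, fun ⟨hkt, hc⟩ => ⟨⟨fun l => ?_, hkt⟩, hc⟩⟩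
  linarith [sub_le_sum_sub_sum hkt l]

lemma mem_simplexAbove : k ∈ simplexAbove c t ↔ (∀ l, t l < k l) ∧ ∑ l, k l ≤ c := by
  have hlt : t + 1 ≤ k ↔ ∀ l, t l < k l := forall_congr' fun l => Int.add_one_le_iff
  simp only [simplexAbove, mem_filter, mem_Icc, hlt]
  refine ⟨fun h => ⟨h.1.1, h.2⟩, fun ⟨htk, hc⟩ => ⟨⟨htk, fun l => ?_⟩, hc⟩⟩
  linarith [sub_le_sum_sub_sum (fun j => (htk j).le) l]

lemma simplexBelow_eq_empty (h : ∑ l, t l < c) : simplexBelow c t = ∅ := by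
  refine eq_empty_of_forall_notMem fun k hk => ?_
  obtain ⟨hkt, hc⟩ := mem_simplexBelow.1 hk
  linarith [sum_le_sum fun l (_ : l ∈ univ) => hkt l]

lemma simplexAbove_eq_empty (h : c < ∑ l, t l) : simplexAbove c t = ∅ := by
  refine eq_empty_of_forall_notMem fun k hk => ?_
  obtain ⟨htk, hc⟩ := mem_simplexAbove.1 hk
  linarith [sum_le_sum fun l (_ : l ∈ univ) => (htk l).le]

lemma filter_le_simplexBelow (hut : u ≤ t) :
    (simplexBelow c t).filter (fun k => ∀ l, k l ≤ u l) = simplexBelow c u := by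
  ext k
  simp only [mem_filter, mem_simplexBelow, Pi.le_def]
  exact ⟨fun ⟨⟨_, hc⟩, hku⟩ => ⟨hku, hc⟩,
    fun ⟨hku, hc⟩ => ⟨⟨fun l => (hku l).trans (hut l), hc⟩, hku⟩⟩

lemma filter_lt_simplexAbove (htu : t ≤ u) :
    (simplexAbove c t).filter (fun k => ∀ l, u l < k l) = simplexAbove c u := by
  ext k
  simp only [mem_filter, mem_simplexAbove]
  exact ⟨fun ⟨⟨_, hc⟩, huk⟩ => ⟨huk, hc⟩,
    fun ⟨huk, hc⟩ => ⟨⟨fun l => (htu l).trans_lt (huk l), hc⟩, huk⟩⟩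

end Simplex

lemma sum_eq_sum_sum_cons {α M : Type*} [AddCommMonoid M] {n : ℕ}
    {S : Finset (Fin (n + 1) → α)} {A : Finset α} {B : α → Finset (Fin n → α)}
    (hS : ∀ k, k ∈ S ↔ k 0 ∈ A ∧ Fin.tail k ∈ B (k 0)) (f : (Fin (n + 1) → α) → M) :
    ∑ k ∈ S, f k = ∑ a ∈ A, ∑ j ∈ B a, f (Fin.cons a j) := by
  rw [sum_sigma']
  refine sum_nbij' (fun k => ⟨k 0, Fin.tail k⟩) (fun p => Fin.cons p.1 p.2) ?_ ?_ ?_ ?_ ?_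
  · intro k hk
    simpa using (hS k).1 hk
  · rintro ⟨a, j⟩ hp
    simpa [hS] using hp
  · intro k _
    exact Fin.cons_self_tail k
  · rintro ⟨a, j⟩ _
    simp
  · intro k _
    simp

lemma mem_simplexBelow_succ {n : ℕ} {c : ℤ} {t k : Fin (n + 1) → ℤ} :
    k ∈ simplexBelow c t ↔
      k 0 ∈ Icc (c - ∑ l, Fin.tail t l) (t 0) ∧
        Fin.tail k ∈ simplexBelow (c - k 0) (Fin.tail t) := by
  simp only [mem_simplexBelow, mem_Icc, Pi.le_def, Fin.forall_fin_succ, Fin.sum_univ_succ,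
    Fin.tail]
  constructor
  · rintro ⟨⟨h0, hs⟩, hc⟩
    have := sum_le_sum fun l (_ : l ∈ univ) => hs l
    exact ⟨⟨by linarith, h0⟩, hs, by linarith⟩
  · rintro ⟨⟨-, h0⟩, hs, hc⟩
    exact ⟨⟨h0, hs⟩, by linarith⟩

lemma mem_simplexAbove_succ {n : ℕ} {c : ℤ} {t k : Fin (n + 1) → ℤ} :
    k ∈ simplexAbove c t ↔
      k 0 ∈ Icc (t 0 + 1) (c - ∑ l, Fin.tail t l - n) ∧
        Fin.tail k ∈ simplexAbove (c - k 0) (Fin.tail t) := by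
  simp only [mem_simplexAbove, mem_Icc, Fin.forall_fin_succ, Fin.sum_univ_succ, Fin.tail]
  constructor
  · rintro ⟨⟨h0, hs⟩, hc⟩
    have := sum_le_sum fun l (_ : l ∈ univ) => Int.add_one_le_iff.2 (hs l)
    simp only [sum_add_distrib, sum_const, card_univ, Fintype.card_fin, nsmul_eq_mul,
      mul_one] at this
    exact ⟨⟨h0, by linarith⟩, hs, by linarith⟩
  · rintro ⟨⟨h0, -⟩, hs, hc⟩
    exact ⟨⟨h0, hs⟩, by linarith⟩

lemma iterSumPos_eq_sum {n : ℕ} {c : ℤ} {t : Fin n → ℤ} (h : c ≤ ∑ l, t l)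
    (f : (Fin n → ℤ) → ℝ) : iterSumPos n c t f = ∑ k ∈ simplexBelow c t, f k := by
  induction n generalizing c with
  | zero =>
    have hS : simplexBelow c t = {t} := eq_singleton_iff_unique_mem.2
      ⟨mem_simplexBelow.2 ⟨le_rfl, h⟩, fun k _ => Subsingleton.elim k t⟩
    rw [hS, sum_singleton, iterSumPos]
    exact congrArg f (Subsingleton.elim _ _)
  | succ n ih =>
    rw [iterSumPos]
    refine (sum_congr rfl fun a ha => ih ?_ _).trans
      (sum_eq_sum_sum_cons (fun _ => mem_simplexBelow_succ) f).symm
    linarith [(mem_Icc.1 ha).1]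

lemma iterSumNeg_eq_sum {n : ℕ} {c : ℤ} {t : Fin n → ℤ} (h : ∑ l, t l ≤ c)
    (f : (Fin n → ℤ) → ℝ) : iterSumNeg n c t f = ∑ k ∈ simplexAbove c t, f k := by
  induction n generalizing c with
  | zero =>
    have hS : simplexAbove c t = {t} := eq_singleton_iff_unique_mem.2
      ⟨mem_simplexAbove.2 ⟨finZeroElim, h⟩, fun k _ => Subsingleton.elim k t⟩
    rw [hS, sum_singleton, iterSumNeg]
    exact congrArg f (Subsingleton.elim _ _)
  | succ n ih =>
    rw [iterSumNeg]
    refine (sum_congr rfl fun a ha => ih ?_ _).trans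
      (sum_eq_sum_sum_cons (fun _ => mem_simplexAbove_succ) f).symm
    have := (mem_Icc.1 ha).2
    omega

lemma lampertiG_eq_sum_add_sum {N : ℕ} (Θ : Fin N → ℝ) (Y : (Fin N → ℤ) → ℝ)
    (u : Fin N → ℤ) :
    lampertiG Θ Y u =
      ∑ k ∈ simplexBelow 1 u, Real.exp (-∑ l, (k l : ℝ) * Θ l) * sqInc Y k +
        (-1) ^ N * ∑ k ∈ simplexAbove 0 u, Real.exp (-∑ l, (k l : ℝ) * Θ l) * sqInc Y k := by
  unfold lampertiG
  split_ifs with hu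
  · rw [iterSumPos_eq_sum hu, simplexAbove_eq_empty (by omega), sum_empty, mul_zero, add_zero]
  · rw [iterSumNeg_eq_sum (by omega), simplexBelow_eq_empty (by omega), sum_empty, zero_add]

section SquareIncrement

variable {N : ℕ}

lemma sqInc_congr {X X' : (Fin N → ℤ) → ℝ} {t : Fin N → ℤ}
    (h : ∀ u ∈ Icc (t - 1) t, X u = X' u) : sqInc X t = sqInc X' t := by
  refine sum_congr rfl fun i _ => congrArg _ (h _ ?_)
  simp only [mem_Icc, Pi.le_def, Pi.sub_apply, Pi.one_apply]
  exact ⟨fun l => by split_ifs <;> omega, fun l => by split_ifs <;> omega⟩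

lemma sqInc_add (X X' : (Fin N → ℤ) → ℝ) (t : Fin N → ℤ) :
    sqInc (fun u => X u + X' u) t = sqInc X t + sqInc X' t := by
  simp only [sqInc, mul_add, sum_add_distrib]

lemma sqInc_const_mul (a : ℝ) (X : (Fin N → ℤ) → ℝ) (t : Fin N → ℤ) :
    sqInc (fun u => a * X u) t = a * sqInc X t := by
  simp only [sqInc, mul_sum, mul_left_comm]

lemma sqInc_sum_mul {ι : Type*} (s : Finset ι) (w : ι → (Fin N → ℤ) → ℝ) (g : ι → ℝ)
    (t : Fin N → ℤ) :
    sqInc (fun u => ∑ k ∈ s, w k u * g k) t = ∑ k ∈ s, sqInc (w k) t * g k := by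
  simp only [sqInc, mul_sum, sum_mul, mul_assoc]
  exact sum_comm

lemma sqInc_prod (φ : Fin N → ℤ → ℝ) (t : Fin N → ℤ) :
    sqInc (fun u => ∏ l, φ l (u l)) t = ∏ l, (φ l (t l) - φ l (t l - 1)) := by
  have hφ : ∀ l, φ l (t l) - φ l (t l - 1) =
      ∑ b : Bool, (-1 : ℝ) ^ (if b then 1 else 0 : ℕ) * φ l (t l - if b then 1 else 0) := by
    intro l
    rw [Fintype.sum_bool]
    simp [sub_eq_neg_add]
  simp only [hφ, Fintype.prod_sum, sqInc, prod_mul_distrib, prod_pow_eq_pow_sum]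

lemma sqInc_indicator_le (k t : Fin N → ℤ) :
    sqInc (fun u => if ∀ l, k l ≤ u l then 1 else 0) t = if k = t then 1 else 0 := by
  have hfactor : ∀ l, ((if k l ≤ t l then 1 else 0) - if k l ≤ t l - 1 then 1 else 0 : ℝ) =
      if k l = t l then 1 else 0 := fun l => by split_ifs <;> first | omega | norm_num
  have hprod : (fun u : Fin N → ℤ => if ∀ l, k l ≤ u l then (1 : ℝ) else 0) =
      fun u => ∏ l, if k l ≤ u l then 1 else 0 :=
    funext fun u => by convert Fintype.prod_boole.symm
  rw [hprod, sqInc_prod fun l x => if k l ≤ x then 1 else 0]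
  simp only [hfactor, Fintype.prod_boole, funext_iff]
  congr

lemma sqInc_indicator_lt (k t : Fin N → ℤ) :
    sqInc (fun u => if ∀ l, u l < k l then 1 else 0) t = if k = t then (-1) ^ N else 0 := by
  have hfactor : ∀ l, ((if t l < k l then 1 else 0) - if t l - 1 < k l then 1 else 0 : ℝ) =
      -if k l = t l then 1 else 0 := fun l => by split_ifs <;> first | omega | norm_num
  have hprod : (fun u : Fin N → ℤ => if ∀ l, u l < k l then (1 : ℝ) else 0) =
      fun u => ∏ l, if u l < k l then 1 else 0 :=
    funext fun u => by convert Fintype.prod_boole.symm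
  rw [hprod, sqInc_prod fun l x => if x < k l then 1 else 0]
  simp only [hfactor, prod_neg, Fintype.prod_boole, funext_iff, card_univ, Fintype.card_fin,
    mul_ite, mul_one, mul_zero]

lemma sqInc_sum_simplexBelow (c : ℤ) (g : (Fin N → ℤ) → ℝ) (t : Fin N → ℤ) :
    sqInc (fun u => ∑ k ∈ simplexBelow c u, g k) t = if c ≤ ∑ l, t l then g t else 0 := by
  have hcell : ∀ u ∈ Icc (t - 1) t, ∑ k ∈ simplexBelow c u, g k =
      ∑ k ∈ simplexBelow c t, (if ∀ l, k l ≤ u l then 1 else 0) * g k := fun u hu => by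
    rw [← filter_le_simplexBelow (mem_Icc.1 hu).2, sum_filter]
    simp only [boole_mul]
    congr!
  rw [sqInc_congr hcell,
    sqInc_sum_mul _ fun (k u : Fin N → ℤ) => if ∀ l, k l ≤ u l then 1 else 0]
  simp only [sqInc_indicator_le, boole_mul, sum_ite_eq', mem_simplexBelow, le_refl, true_and]

lemma sqInc_sum_simplexAbove (c : ℤ) (g : (Fin N → ℤ) → ℝ) (t : Fin N → ℤ) :
    sqInc (fun u => ∑ k ∈ simplexAbove c u, g k) t =
      if ∑ l, t l ≤ c then (-1) ^ N * g t else 0 := by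
  have hcell : ∀ u ∈ Icc (t - 1) t, ∑ k ∈ simplexAbove c u, g k =
      ∑ k ∈ simplexAbove c (t - 1), (if ∀ l, u l < k l then 1 else 0) * g k := fun u hu => by
    rw [← filter_lt_simplexAbove (mem_Icc.1 hu).1, sum_filter]
    simp only [boole_mul]
    congr!
  rw [sqInc_congr hcell,
    sqInc_sum_mul _ fun (k u : Fin N → ℤ) => if ∀ l, u l < k l then 1 else 0]
  simp only [sqInc_indicator_lt, ite_mul, zero_mul, sum_ite_eq', mem_simplexAbove, Pi.sub_apply,
    Pi.one_apply, sub_lt_self_iff, zero_lt_one, implies_true, true_and]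

end SquareIncrement

theorem lampertiG_sqInc_general {N : ℕ} (Θ : Fin N → ℝ) (Y : (Fin N → ℤ) → ℝ) (t : Fin N → ℤ) :
    sqInc (lampertiG Θ Y) t = Real.exp (-∑ l, (t l : ℝ) * Θ l) * sqInc Y t := by
  set g : (Fin N → ℤ) → ℝ := fun k => Real.exp (-∑ l, (k l : ℝ) * Θ l) * sqInc Y k
  have hG : lampertiG Θ Y = fun u => ∑ k ∈ simplexBelow 1 u, g k +
      (-1) ^ N * ∑ k ∈ simplexAbove 0 u, g k := funext (lampertiG_eq_sum_add_sum Θ Y)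
  rw [hG, sqInc_add, sqInc_const_mul, sqInc_sum_simplexBelow, sqInc_sum_simplexAbove]
  split_ifs with hpos hneg hneg
  · omega
  · simp [g]
  · rw [zero_add, ← mul_assoc, ← mul_pow]
    simp [g]
  · omega

/-- Lemma gG (ii): the square increment of the field `G` built
from `Y` via the chained sums satisfies `Δ_t G = e^{−⟨t,Θ⟩} Δ_t Y` for every `t`. -/
theorem lampertiG_sqInc {N : ℕ} (hN : 1 ≤ N) (Θ : Fin N → ℝ)
    (hΘ : ∀ l, 0 < Θ l) (Y : (Fin N → ℤ) → ℝ) (t : Fin N → ℤ) :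
    sqInc (lampertiG Θ Y) t = Real.exp (-∑ l, (t l : ℝ) * Θ l) * sqInc Y t :=
  lampertiG_sqInc_general Θ Y t
end
end

section
/- Let N ≥ 1, Θ = (θ_1,…,θ_N) ∈ (0,∞)^N, and let X = (X_t)_{t∈ℤ^N} be a random field. Suppose there exists a field G = (G_t)_{t∈ℤ^N} in the class 𝒢_Θ such that X_t = ⟨Θ̂, X̂⁻_t⟩ + Δ_t G for every t ∈ ℤ^N, and suppose that for every j ∈ {1,…,N} and all fixed t_1,…,t_{j−1},t_{j+1},…,t_N ∈ ℤ, e^{m θ_j} X_{t_1,…,t_{j−1},m,t_{j+1},…,t_N} → 0 in probability as m → −∞. Then X is stationary. -/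
open MeasureTheory Filter

noncomputable section

/-!
Write `D_j V_u = V_u - e^{-θ_j} V_{u - e_j}`. These operators commute, and `D_1 ⋯ D_N X` is
`X - ⟨Θ̂, X̂⁻⟩`, which by the representation is the stationary field `Δ G`. A single `D_j` is
inverted by the geometric telescoping
`V_p = Σ_{r<L} e^{-rθ_j} (D_j V)_{p - r e_j} + e^{-Lθ_j} V_{p - L e_j}`.
The partial sums are one fixed measurable functional of finitely many values of `D_j V`, shifted
or not, so stationarity of `D_j V` makes their laws shift invariant. The remainder tends to zero in
probability by the decay of `X` along `e_j`, which passes to every product of the `D_i` applied to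
`X` (a finite combination of translates of `X`), and equality of laws survives limits in
probability. Undoing the `N` operators one at a time shows that `X` is stationary.
-/

open Finset Topology

namespace MeasureTheory

variable {Ω ι : Type*} [MeasurableSpace Ω] {μ : Measure Ω} {l : Filter ι}

theorem TendstoInMeasure.pi {κ : Type*} [Fintype κ] {E : κ → Type*}
    [∀ k, PseudoMetricSpace (E k)] {f : ι → Ω → ∀ k, E k} {g : Ω → ∀ k, E k}
    (h : ∀ k, TendstoInMeasure μ (fun i ω => f i ω k) l (fun ω => g ω k)) :
    TendstoInMeasure μ f l g := by
  simp only [tendstoInMeasure_iff_dist] at h ⊢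
  intro ε hε
  have hsum : Tendsto (fun i => ∑ k, μ {ω | ε ≤ dist (f i ω k) (g ω k)}) l (𝓝 0) := by
    simpa using tendsto_finsetSum univ fun k _ => h k ε hε
  refine tendsto_of_tendsto_of_tendsto_of_le_of_le tendsto_const_nhds hsum (fun _ => zero_le)
    fun i => (measure_mono fun ω hω => ?_).trans (measure_iUnion_fintype_le _ _)
  by_contra hcon
  simp only [Set.mem_iUnion, Set.mem_ofPred_eq, not_exists, not_le] at hcon
  exact (not_le.2 ((dist_pi_lt_iff hε).2 hcon)) hω

theorem TendstoInMeasure.comp_uniformContinuous {E F : Type*} [PseudoMetricSpace E]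
    [PseudoMetricSpace F] {φ : E → F} (hφ : UniformContinuous φ) {f : ι → Ω → E} {g : Ω → E}
    (h : TendstoInMeasure μ f l g) :
    TendstoInMeasure μ (fun i ω => φ (f i ω)) l (fun ω => φ (g ω)) := by
  rw [tendstoInMeasure_iff_dist] at h ⊢
  intro ε hε
  obtain ⟨δ, hδ, hφδ⟩ := Metric.uniformContinuous_iff.1 hφ ε hε
  refine tendsto_of_tendsto_of_tendsto_of_le_of_le tendsto_const_nhds (h δ hδ)
    (fun _ => zero_le) fun i => measure_mono fun ω hω => ?_
  by_contra hcon
  exact (not_le.2 (hφδ (not_le.1 hcon))) hω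

theorem TendstoInMeasure.const_mul {f : ι → Ω → ℝ} (c : ℝ)
    (h : TendstoInMeasure μ f l fun _ => 0) :
    TendstoInMeasure μ (fun i ω => c * f i ω) l fun _ => 0 := by
  simpa using h.comp_uniformContinuous (uniformContinuous_mul_left' c)

theorem TendstoInMeasure.const_sub {f : ι → Ω → ℝ} (g : Ω → ℝ)
    (h : TendstoInMeasure μ f l fun _ => 0) : TendstoInMeasure μ (fun i ω => g ω - f i ω) l g := by
  rw [tendstoInMeasure_iff_dist] at h ⊢
  simpa [Real.dist_eq] using h

theorem tendstoInMeasure_finset_sum_const_mul {κ : Type*} [Fintype κ] (s : Finset κ) (a : κ → ℝ)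
    {f : κ → ι → Ω → ℝ} (h : ∀ k, TendstoInMeasure μ (f k) l fun _ => 0) :
    TendstoInMeasure μ (fun i ω => ∑ k ∈ s, a k * f k i ω) l fun _ => 0 := by
  let φ : (κ → ℝ) →L[ℝ] ℝ := ∑ k ∈ s, a k • ContinuousLinearMap.proj k
  have hpi : TendstoInMeasure μ (fun i ω k => f k i ω) l fun _ _ => 0 := TendstoInMeasure.pi h
  simpa [φ] using hpi.comp_uniformContinuous φ.uniformContinuous

theorem map_eq_of_tendstoInMeasure [IsProbabilityMeasure μ] [l.IsCountablyGenerated] [l.NeBot]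
    {E : Type*} [PseudoMetricSpace E] [MeasurableSpace E] [BorelSpace E]
    {f f' : ι → Ω → E} {g g' : Ω → E}
    (hf : ∀ i, AEMeasurable (f i) μ) (hf' : ∀ i, AEMeasurable (f' i) μ)
    (hff' : ∀ i, μ.map (f i) = μ.map (f' i))
    (hg : TendstoInMeasure μ f l g) (hg' : TendstoInMeasure μ f' l g') :
    μ.map g = μ.map g' := by
  have h' := hg'.tendstoInDistribution hf'
  refine tendstoInDistribution_unique f (hg.tendstoInDistribution hf)
    ⟨hf, h'.aemeasurable_limit, ?_⟩
  simpa only [hff'] using h'.tendsto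

end MeasureTheory

theorem eq_sum_range_pow_mul_sub_add {G : Type*} [AddCommGroup G] (x : G → ℝ) (c : ℝ)
    (e p : G) (L : ℕ) :
    x p = ∑ r ∈ range L, c ^ r * (x (p - r • e) - c * x (p - r • e - e)) +
      c ^ L * x (p - L • e) := by
  have h := sum_range_sub' (fun r => c ^ r * x (p - r • e)) L
  simp only [pow_succ, succ_nsmul, sub_add_eq_sub_sub, zero_smul, sub_zero, pow_zero,
    one_mul] at h
  rw [← sub_eq_iff_eq_add, ← h]
  exact sum_congr rfl fun r _ => by ring

section WeightedIncrement

variable {N : ℕ}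

/-- `(∏_{j ∈ T} D_j) x`, where `D_j x_u = x_u - e^{-θ_j} x_{u - e_j}`. -/
def weightedInc (Θ : Fin N → ℝ) (T : Finset (Fin N)) (x : (Fin N → ℤ) → ℝ)
    (u : Fin N → ℤ) : ℝ :=
  ∑ S ∈ T.powerset, (-1) ^ S.card * Real.exp (-∑ l ∈ S, Θ l) * x (u - ∑ l ∈ S, Pi.single l 1)

variable (Θ : Fin N → ℝ) (x : (Fin N → ℤ) → ℝ)

@[simp]
theorem weightedInc_empty : weightedInc Θ ∅ x = x := by
  funext u
  simp [weightedInc]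

theorem weightedInc_insert {a : Fin N} {T : Finset (Fin N)} (ha : a ∉ T) (u : Fin N → ℤ) :
    weightedInc Θ (insert a T) x u =
      weightedInc Θ T x u - Real.exp (-Θ a) * weightedInc Θ T x (u - Pi.single a 1) := by
  rw [weightedInc, sum_powerset_insert ha, weightedInc, weightedInc, mul_sum, sub_eq_add_neg,
    ← sum_neg_distrib]
  congr 1
  refine sum_congr rfl fun S hS => ?_
  have haS : a ∉ S := fun h => ha (mem_powerset.1 hS h)
  rw [card_insert_of_notMem haS, sum_insert haS, sum_insert haS, neg_add, Real.exp_add,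
    sub_add_eq_sub_sub]
  ring

theorem weightedInc_univ (u : Fin N → ℤ) :
    weightedInc Θ univ x u = x u - prevInner Θ x u := by
  let e : (Fin N → Bool) ≃ Finset (Fin N) :=
    { toFun := fun ε => univ.filter (ε ·)
      invFun := fun S l => decide (l ∈ S)
      left_inv := fun ε => by ext; simp
      right_inv := fun S => by ext; simp }
  have hterm : ∀ ε : Fin N → Bool,
      (-1) ^ (e ε).card * Real.exp (-∑ l ∈ e ε, Θ l) * x (u - ∑ l ∈ e ε, Pi.single l 1) =
        (-1) ^ (∑ l, if ε l then 1 else 0 : ℕ) *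
          (Real.exp (-∑ l, (if ε l then (1 : ℝ) else 0) * Θ l) *
            x (fun l => u l - if ε l then 1 else 0)) := by
    intro ε
    have hshift : u - ∑ l ∈ e ε, Pi.single l 1 = fun l => u l - if ε l then 1 else 0 := by
      funext k
      simp [e, Finset.sum_apply, Pi.single_apply]
    rw [hshift]
    simp only [e, Equiv.coe_fn_mk, card_filter, sum_filter, ite_mul, one_mul, zero_mul]
    ring
  rw [weightedInc, powerset_univ, ← e.sum_comp, ← add_sum_erase _ _ (mem_univ fun _ => false),
    prevInner, filter_ne', sub_eq_add_neg]
  congr 1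
  · simp [e]
  · refine (sum_congr rfl fun ε _ => ?_).trans (sum_neg_distrib _)
    rw [hterm, pow_add, pow_one]
    ring

end WeightedIncrement

section RandomField

variable {Ω : Type*} [MeasurableSpace Ω] {μ : Measure Ω} {N : ℕ}

theorem HasSameFDD.map_eq_fintype {X Y : (Fin N → ℤ) → Ω → ℝ} (h : HasSameFDD μ X Y)
    (hX : ∀ t, Measurable (X t)) (hY : ∀ t, Measurable (Y t)) {κ : Type*} [Fintype κ]
    (τ : κ → Fin N → ℤ) :
    μ.map (fun ω k => X (τ k) ω) = μ.map (fun ω k => Y (τ k) ω) := by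
  let e := Fintype.equivFin κ
  have reindex : ∀ Z : (Fin N → ℤ) → Ω → ℝ,
      (fun ω k => Z (τ k) ω) = (fun w k => w (e k)) ∘ fun ω i => Z (τ (e.symm i)) ω := by
    intro Z; funext ω k; simp
  have hmeas : Measurable fun (w : Fin (Fintype.card κ) → ℝ) (k : κ) => w (e k) := by fun_prop
  rw [reindex X, reindex Y, ← Measure.map_map hmeas (measurable_pi_lambda _ fun i => hX _),
    ← Measure.map_map hmeas (measurable_pi_lambda _ fun i => hY _), h]

theorem isStationaryRF_of_sub_mul_sub [IsProbabilityMeasure μ] {V : (Fin N → ℤ) → Ω → ℝ}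
    (hV : ∀ u, Measurable (V u)) (c : ℝ) (e : Fin N → ℤ)
    (hdecay : ∀ p, TendstoInMeasure μ (fun (L : ℕ) ω => c ^ L * V (p - L • e) ω) atTop
      fun _ => 0)
    (hU : IsStationaryRF μ fun u ω => V u ω - c * V (u - e) ω) :
    IsStationaryRF μ V := by
  intro s n t
  set U : (Fin N → ℤ) → Ω → ℝ := fun u ω => V u ω - c * V (u - e) ω
  have hUm : ∀ u, Measurable (U u) := fun u => (hV u).sub ((hV _).const_mul c)
  let H : (Fin N → ℤ) → ℕ → Ω → Fin n → ℝ := fun s' L ω i =>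
    ∑ r ∈ range L, c ^ r * U (t i + s' - r • e) ω
  have hHm : ∀ s' L, Measurable (H s' L) := fun s' L =>
    measurable_pi_lambda _ fun i => Finset.measurable_sum _ fun r _ => (hUm _).const_mul _
  have hlim : ∀ s', TendstoInMeasure μ (H s') atTop fun ω i => V (t i + s') ω := by
    refine fun s' => TendstoInMeasure.pi fun i => ?_
    convert (hdecay (t i + s')).const_sub (V (t i + s')) using 2 with L
    funext ω
    rw [eq_sum_range_pow_mul_sub_add (V · ω) c e (t i + s') L]
    simp [H, U]
  have hlaw : ∀ L, μ.map (H s L) = μ.map (H 0 L) := by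
    intro L
    let Ψ : (Fin n × Fin L → ℝ) → Fin n → ℝ := fun w i => ∑ r : Fin L, c ^ (r : ℕ) * w (i, r)
    have hΨ : Measurable Ψ := by fun_prop
    have hH : ∀ s', H s' L = Ψ ∘ fun ω q => U (t q.1 - (q.2 : ℕ) • e + s') ω := by
      intro s'
      funext ω i
      simp only [H, Ψ, Function.comp_apply, sub_add_eq_add_sub]
      exact (Fin.sum_univ_eq_sum_range (fun r => c ^ r * U (t i + s' - r • e) ω) L).symm
    rw [hH, hH, ← Measure.map_map hΨ (measurable_pi_lambda _ fun _ => hUm _),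
      ← Measure.map_map hΨ (measurable_pi_lambda _ fun _ => hUm _),
      (hU s).map_eq_fintype (fun _ => hUm _) hUm]
    simp only [add_zero]
    rfl
  simpa using map_eq_of_tendstoInMeasure (fun L => (hHm s L).aemeasurable)
    (fun L => (hHm 0 L).aemeasurable) hlaw (hlim s) (hlim 0)

theorem measurable_weightedInc {X : (Fin N → ℤ) → Ω → ℝ} (hX : ∀ u, Measurable (X u))
    (Θ : Fin N → ℝ) (T : Finset (Fin N)) (u : Fin N → ℤ) :
    Measurable fun ω => weightedInc Θ T (fun v => X v ω) u :=
  Finset.measurable_sum _ fun _ _ => (hX _).const_mul _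

theorem tendstoInMeasure_weightedInc {X : (Fin N → ℤ) → Ω → ℝ} {c : ℝ} {e : Fin N → ℤ}
    (hX : ∀ p, TendstoInMeasure μ (fun (L : ℕ) ω => c ^ L * X (p - L • e) ω) atTop
      fun _ => 0)
    (Θ : Fin N → ℝ) (T : Finset (Fin N)) (p : Fin N → ℤ) :
    TendstoInMeasure μ
      (fun (L : ℕ) ω => c ^ L * weightedInc Θ T (fun v => X v ω) (p - L • e)) atTop
      fun _ => 0 := by
  convert tendstoInMeasure_finset_sum_const_mul T.powerset
    (fun S => (-1) ^ S.card * Real.exp (-∑ l ∈ S, Θ l))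
    fun S => hX (p - ∑ l ∈ S, Pi.single l 1) using 3 with L ω
  rw [weightedInc, mul_sum]
  refine sum_congr rfl fun S _ => ?_
  rw [sub_right_comm]
  ring

theorem isStationaryRF_of_weightedInc [IsProbabilityMeasure μ] {X : (Fin N → ℤ) → Ω → ℝ}
    (hX : ∀ u, Measurable (X u)) (Θ : Fin N → ℝ)
    (hdecay : ∀ j p, TendstoInMeasure μ
      (fun (L : ℕ) ω => Real.exp (-Θ j) ^ L * X (p - L • Pi.single j 1) ω) atTop fun _ => 0)
    (T : Finset (Fin N)) (hT : IsStationaryRF μ fun u ω => weightedInc Θ T (fun v => X v ω) u) :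
    IsStationaryRF μ X := by
  induction T using Finset.induction_on with
  | empty => simpa using hT
  | insert a T ha ih =>
    refine ih (isStationaryRF_of_sub_mul_sub (measurable_weightedInc hX Θ T) _ _
      (tendstoInMeasure_weightedInc (hdecay a) Θ T) ?_)
    simpa only [weightedInc_insert _ _ ha] using hT

theorem tendstoInMeasure_exp_pow_mul_sub_single {X : (Fin N → ℤ) → Ω → ℝ} {Θ : Fin N → ℝ}
    {j : Fin N} (hlim : ∀ t : Fin N → ℤ, TendstoInMeasure μ
      (fun (m : ℤ) ω => Real.exp (m * Θ j) * X (Function.update t j m) ω) atBot fun _ => 0)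
    (p : Fin N → ℤ) :
    TendstoInMeasure μ (fun (L : ℕ) ω => Real.exp (-Θ j) ^ L * X (p - L • Pi.single j 1) ω)
      atTop fun _ => 0 := by
  have hm : Tendsto (fun L : ℕ => p j - L) atTop atBot := by
    simpa [sub_eq_add_neg] using tendsto_atBot_add_const_left _ (p j)
      (tendsto_neg_atTop_atBot.comp tendsto_natCast_atTop_atTop)
  convert ((hlim p).comp hm).const_mul (Real.exp (-(p j * Θ j))) using 3 with L ω
  have hpoint : p - L • Pi.single j 1 = Function.update p j (p j - L) := by
    ext l
    rcases eq_or_ne l j with rfl | hl <;> simp [*]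
  simp only [hpoint, Function.comp_apply]
  rw [← mul_assoc, ← Real.exp_add, ← Real.exp_nat_mul]
  congr 2
  push_cast
  ring

end RandomField

theorem stationary_of_representation_general {Ω : Type*} [MeasurableSpace Ω]
    (μ : Measure Ω) [IsProbabilityMeasure μ] {N : ℕ}
    (Θ : Fin N → ℝ)
    (X : (Fin N → ℤ) → Ω → ℝ) (hmeas : ∀ t, Measurable (X t))
    (G : (Fin N → ℤ) → Ω → ℝ) (hG : MemClassG μ Θ G)
    (hrep : ∀ t ω, X t ω = prevInner Θ (fun u => X u ω) t + sqInc (fun u => G u ω) t)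
    (hlim : ∀ (j : Fin N) (t : Fin N → ℤ),
      TendstoInMeasure μ
        (fun m : ℤ => fun ω => Real.exp ((m : ℝ) * Θ j) * X (Function.update t j m) ω)
        atBot (fun _ => 0)) :
    IsStationaryRF μ X := by
  refine isStationaryRF_of_weightedInc hmeas Θ
    (fun j => tendstoInMeasure_exp_pow_mul_sub_single (hlim j)) univ ?_
  have hinc : (fun u ω => weightedInc Θ univ (fun v => X v ω) u) =
      fun u ω => sqInc (fun v => G v ω) u := by
    funext u ω
    rw [weightedInc_univ, hrep u ω, add_sub_cancel_left]
  exact hinc ▸ hG.1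

/-- Theorem gchar1: if `X` satisfies
`X_t = ⟨Θ̂, X̂⁻_t⟩ + Δ_t G` for some `G ∈ 𝒢_Θ` and
`e^{m θ_j} X_{t₁,…,m,…,t_N} → 0` in probability as `m → −∞` in each coordinate
direction, then `X` is stationary. -/
theorem stationary_of_representation {Ω : Type*} [MeasurableSpace Ω]
    (μ : Measure Ω) [IsProbabilityMeasure μ] {N : ℕ} (hN : 1 ≤ N)
    (Θ : Fin N → ℝ) (hΘ : ∀ l, 0 < Θ l)
    (X : (Fin N → ℤ) → Ω → ℝ) (hmeas : ∀ t, Measurable (X t))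
    (G : (Fin N → ℤ) → Ω → ℝ) (hG : MemClassG μ Θ G)
    (hrep : ∀ t ω, X t ω = prevInner Θ (fun u => X u ω) t + sqInc (fun u => G u ω) t)
    (hlim : ∀ (j : Fin N) (t : Fin N → ℤ),
      TendstoInMeasure μ
        (fun m : ℤ => fun ω => Real.exp ((m : ℝ) * Θ j) * X (Function.update t j m) ω)
        atBot (fun _ => 0)) :
    IsStationaryRF μ X :=
  stationary_of_representation_general μ Θ X hmeas G hG hrep hlim
end
end
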